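/- Fix an integer C ≥ 2 and an index c. Let (p⁽ⁿ⁾)ₙ be a sequence of probability vectors over C classes (p⁽ⁿ⁾ᵢ ≥ 0, Σᵢ p⁽ⁿ⁾ᵢ = 1) such that 0 < p⁽ⁿ⁾_c < 1 for all n and p⁽ⁿ⁾_c → 1 as n → ∞. Then H₂(p⁽ⁿ⁾_c)/H(p⁽ⁿ⁾) → 1 as n → ∞, where H₂ is the binary entropy in bits and H is the Shannon entropy in bits. -/

import Mathlib

/-!
In nats, the entropy of `p` exceeds the binary entropy of `p c` by the entropy of the remaining
mass `s = 1 - p c` spread over the other `C - 1` classes, minus that of `s` as a single lump. By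
subadditivity and concavity of `x ↦ -x log x` this excess lies between `0` and `s log (C - 1)`,
while `H₂(p c) ≥ -s log s`. The relative excess is therefore at most `log (C - 1) / (-log s)`,
which tends to `0` as `s → 0`.
-/

/-- Binary entropy in bits: H₂(q) = −q·log₂ q − (1−q)·log₂(1−q), with 0·log₂ 0 = 0
(automatic since `Real.logb 2 0 = 0`). -/
noncomputable def binEnt (q : ℝ) : ℝ :=
  -(q * Real.logb 2 q) - (1 - q) * Real.logb 2 (1 - q)

/-- Shannon entropy in bits of a probability vector over `Fin C`, with 0·log₂ 0 = 0. -/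
noncomputable def shannonEnt {C : ℕ} (p : Fin C → ℝ) : ℝ :=
  -∑ i, p i * Real.logb 2 (p i)

open Finset Filter Real Topology

section NegMulLog

variable {ι : Type*} (s : Finset ι) {f : ι → ℝ}

lemma negMulLog_sum_le_sum_negMulLog (hf : ∀ i ∈ s, 0 ≤ f i) :
    negMulLog (∑ i ∈ s, f i) ≤ ∑ i ∈ s, negMulLog (f i) := by
  calc negMulLog (∑ i ∈ s, f i) = ∑ i ∈ s, -f i * log (∑ j ∈ s, f j) := by
        rw [negMulLog, ← sum_neg_distrib, sum_mul]
    _ ≤ ∑ i ∈ s, negMulLog (f i) := sum_le_sum fun i hi => by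
        rcases (hf i hi).eq_or_lt with hi0 | hi0
        · simp [← hi0]
        · have := log_le_log hi0 (single_le_sum hf hi)
          rw [negMulLog]
          nlinarith

lemma sum_negMulLog_le (hf : ∀ i ∈ s, 0 ≤ f i) :
    ∑ i ∈ s, negMulLog (f i) ≤ negMulLog (∑ i ∈ s, f i) + (∑ i ∈ s, f i) * log #s := by
  rcases s.eq_empty_or_nonempty with rfl | hs
  · simp
  have hn : (0 : ℝ) < #s := by exact_mod_cast hs.card_pos
  have jensen := concaveOn_negMulLog.le_map_sum (t := s) (w := fun _ => (#s : ℝ)⁻¹)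
    (fun _ _ => by positivity) (by simp [hn.ne']) (fun i hi => Set.mem_Ici.mpr (hf i hi))
  rw [← smul_sum, ← smul_sum, smul_eq_mul, smul_eq_mul, negMulLog_mul,
    negMulLog, log_inv] at jensen
  have := mul_le_mul_of_nonneg_left jensen hn.le
  field_simp at this
  linarith

end NegMulLog

section Entropy

variable {ι : Type*} [Fintype ι] [DecidableEq ι] {p : ι → ℝ}

lemma sum_erase_eq_one_sub (hp1 : ∑ i, p i = 1) (c : ι) :
    ∑ i ∈ univ.erase c, p i = 1 - p c := by
  rw [sum_erase_eq_sub (mem_univ c), hp1]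

lemma binEntropy_le_sum_negMulLog (hp0 : ∀ i, 0 ≤ p i) (hp1 : ∑ i, p i = 1) (c : ι) :
    binEntropy (p c) ≤ ∑ i, negMulLog (p i) := by
  rw [binEntropy_eq_negMulLog_add_negMulLog_one_sub, ← add_sum_erase _ _ (mem_univ c),
    ← sum_erase_eq_one_sub hp1 c]
  gcongr
  exact negMulLog_sum_le_sum_negMulLog _ fun i _ => hp0 i

lemma sum_negMulLog_le_binEntropy_add (hp0 : ∀ i, 0 ≤ p i) (hp1 : ∑ i, p i = 1) (c : ι) :
    ∑ i, negMulLog (p i)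
      ≤ binEntropy (p c) + (1 - p c) * log ((Fintype.card ι - 1 : ℕ) : ℝ) := by
  have hcard : #(univ.erase c) = Fintype.card ι - 1 := by
    rw [card_erase_of_mem (mem_univ c), card_univ]
  rw [binEntropy_eq_negMulLog_add_negMulLog_one_sub, ← add_sum_erase _ _ (mem_univ c), add_assoc,
    ← sum_erase_eq_one_sub hp1 c, ← hcard]
  gcongr
  exact sum_negMulLog_le _ fun i _ => hp0 i

lemma sum_negMulLog_le_one_add_mul_binEntropy (hp0 : ∀ i, 0 ≤ p i) (hp1 : ∑ i, p i = 1) {c : ι}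
    (hc : 0 < p c ∧ p c < 1) :
    ∑ i, negMulLog (p i)
      ≤ (1 + log ((Fintype.card ι - 1 : ℕ) : ℝ) / -log (1 - p c)) * binEntropy (p c) := by
  obtain ⟨hc0, hc1⟩ := hc
  have hlog : 0 < -log (1 - p c) := neg_pos.mpr (log_neg (by linarith) (by linarith))
  have hrest : negMulLog (1 - p c) ≤ binEntropy (p c) := by
    rw [binEntropy_eq_negMulLog_add_negMulLog_one_sub]
    linarith [negMulLog_nonneg hc0.le hc1.le]
  calc ∑ i, negMulLog (p i)
      ≤ binEntropy (p c) + (1 - p c) * log ((Fintype.card ι - 1 : ℕ) : ℝ) :=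
        sum_negMulLog_le_binEntropy_add hp0 hp1 c
    _ = binEntropy (p c)
          + log ((Fintype.card ι - 1 : ℕ) : ℝ) / -log (1 - p c) * negMulLog (1 - p c) := by
        have : log (1 - p c) ≠ 0 := neg_ne_zero.mp hlog.ne'
        rw [negMulLog]
        field_simp
    _ ≤ (1 + log ((Fintype.card ι - 1 : ℕ) : ℝ) / -log (1 - p c)) * binEntropy (p c) := by
        rw [add_mul, one_mul]
        gcongr

end Entropy

lemma tendsto_div_of_le_of_le_one_add_mul {α : Type*} {l : Filter α} {a b ε : α → ℝ}
    (ha : ∀ x, 0 < a x) (hab : ∀ x, a x ≤ b x) (hba : ∀ x, b x ≤ (1 + ε x) * a x)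
    (hε : Tendsto ε l (𝓝 0)) : Tendsto (fun x => a x / b x) l (𝓝 1) := by
  have hlower : ∀ x, (1 + ε x)⁻¹ ≤ a x / b x := fun x => by
    have hb : 0 < b x := (ha x).trans_le (hab x)
    have hε1 : 0 < 1 + ε x := pos_of_mul_pos_left (hb.trans_le (hba x)) (ha x).le
    rw [inv_le_comm₀ hε1 (div_pos (ha x) hb), inv_div, div_le_iff₀ (ha x)]
    exact hba x
  have hupper : ∀ x, a x / b x ≤ 1 := fun x =>
    div_le_one_of_le₀ (hab x) ((ha x).le.trans (hab x))
  have hlim : Tendsto (fun x => (1 + ε x)⁻¹) l (𝓝 1) := by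
    simpa using (tendsto_const_nhds.add hε).inv₀ (by norm_num : (1 : ℝ) + 0 ≠ 0)
  exact tendsto_of_tendsto_of_tendsto_of_le_of_le hlim tendsto_const_nhds hlower hupper

lemma binEnt_eq_binEntropy_div (q : ℝ) : binEnt q = binEntropy q / log 2 := by
  simp only [binEnt, binEntropy_eq_negMulLog_add_negMulLog_one_sub, negMulLog, logb]
  ring

lemma shannonEnt_eq_sum_negMulLog_div {C : ℕ} (p : Fin C → ℝ) :
    shannonEnt p = (∑ i, negMulLog (p i)) / log 2 := by
  simp only [shannonEnt, negMulLog, logb, sum_div, ← sum_neg_distrib]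
  congr! 1 with i
  ring

theorem stmt_13_general (C : ℕ) (c : Fin C) (p : ℕ → Fin C → ℝ)
    (hp0 : ∀ n i, 0 ≤ p n i) (hp1 : ∀ n, (∑ i, p n i) = 1)
    (hc : ∀ n, 0 < p n c ∧ p n c < 1)
    (hlim : Filter.Tendsto (fun n => p n c) Filter.atTop (nhds 1)) :
    Filter.Tendsto (fun n => binEnt (p n c) / shannonEnt (p n))
      Filter.atTop (nhds 1) := by
  have hratio : ∀ n, binEnt (p n c) / shannonEnt (p n)
      = binEntropy (p n c) / ∑ i, negMulLog (p n i) := fun n => by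
    rw [binEnt_eq_binEntropy_div, shannonEnt_eq_sum_negMulLog_div,
      div_div_div_cancel_right₀ (log_pos one_lt_two).ne']
  have hrest : Tendsto (fun n => 1 - p n c) atTop (𝓝[>] 0) :=
    tendsto_nhdsWithin_iff.mpr ⟨by simpa using hlim.const_sub 1,
      Eventually.of_forall fun n => sub_pos.mpr (hc n).2⟩
  have hε : Tendsto (fun n => log ((C - 1 : ℕ) : ℝ) / -log (1 - p n c)) atTop (𝓝 0) :=
    tendsto_const_nhds.div_atTop (tendsto_neg_atBot_atTop.comp (tendsto_log_nhdsGT_zero.comp hrest))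
  simp only [hratio]
  refine tendsto_div_of_le_of_le_one_add_mul (fun n => binEntropy_pos (hc n).1 (hc n).2)
    (fun n => binEntropy_le_sum_negMulLog (hp0 n) (hp1 n) c) (fun n => ?_) hε
  simpa using sum_negMulLog_le_one_add_mul_binEntropy (hp0 n) (hp1 n) (hc n)

/-- If p⁽ⁿ⁾ are probability vectors over C ≥ 2 classes with 0 < p⁽ⁿ⁾_c < 1 and
p⁽ⁿ⁾_c → 1, then H₂(p⁽ⁿ⁾_c)/H(p⁽ⁿ⁾) → 1. -/
theorem stmt_13 (C : ℕ) (hC : 2 ≤ C) (c : Fin C) (p : ℕ → Fin C → ℝ)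
    (hp0 : ∀ n i, 0 ≤ p n i) (hp1 : ∀ n, (∑ i, p n i) = 1)
    (hc : ∀ n, 0 < p n c ∧ p n c < 1)
    (hlim : Filter.Tendsto (fun n => p n c) Filter.atTop (nhds 1)) :
    Filter.Tendsto (fun n => binEnt (p n c) / shannonEnt (p n))
      Filter.atTop (nhds 1) :=
  stmt_13_general C c p hp0 hp1 hc hlim
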